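/- For χ ∈ Δ^ℂ_{p,q}, the algebraic Dirac p-form vanishes exactly at the zero spinor: α^p_χ = 0 if and only if χ = 0. -/

import Mathlib

/-!
Evaluate `α^p_χ` on the negative basis vectors `e_{i₁}, …, e_{i_p}`: the wedge
`e^♭_{j₁} ∧ ⋯ ∧ e^♭_{j_p}` vanishes there unless `{j₁, …, j_p} = {i₁, …, i_p}`, so only the
coefficient `d_{p,p} (-1)^p ⟨e_{i₁} ⋯ e_{i_p} · χ, χ⟩_Δ` survives. The matrices `Φ(e_{i_r})` are
pairwise anticommuting involutions, so `(e_{i₁} ⋯ e_{i_p})² = (-1)^(p(p-1)/2)` and the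
coefficient is a nonzero multiple of `(χ, χ)`. Being real by the choice of `d_{p,p}`, it vanishes
only when `χ = 0`.
-/

open Complex Matrix

namespace Paper

noncomputable section

/-- The 2×2 generator matrices of Remark 2.1. -/
def matE : Matrix (Fin 2) (Fin 2) ℂ := 1
def matT : Matrix (Fin 2) (Fin 2) ℂ := !![-1, 0; 0, 1]
def matG1 : Matrix (Fin 2) (Fin 2) ℂ := !![0, Complex.I; Complex.I, 0]
def matG2 : Matrix (Fin 2) (Fin 2) ℂ := !![0, -1; 1, 0]

/-- Iterated Kronecker product of 2×2 matrices, realised on the index type `Fin m → Fin 2`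
(the slot `ν` corresponds to the `(ν+1)`-st label of the basis spinors `u(ε₁,…,ε_m)`,
i.e. the Kronecker factors are taken from right to left). -/
def tprod {m : ℕ} (M : Fin m → Matrix (Fin 2) (Fin 2) ℂ) :
    Matrix (Fin m → Fin 2) (Fin m → Fin 2) ℂ :=
  Matrix.of fun a b => ∏ ν, M ν (a ν) (b ν)

/-- `τ_j = 1` if `ε_j = 1` and `τ_j = i` if `ε_j = -1`. -/
def tau {n : ℕ} (ε : Fin n → ℝ) (j : Fin n) : ℂ := if ε j = 1 then 1 else Complex.I

/-- The matrices `Φ_{p,q}(e_i)` of the explicit Clifford representation of Remark 2.1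
(0-based index `i`; the paper's `e_{2j-1}` resp. `e_{2j}` correspond to `i = 2j-2` resp.
`i = 2j-1`, acting by `g₁` resp. `g₂` in slot `j-1`, by `T` in the lower slots and by `E`
in the higher slots).  For odd `n` the last matrix is the first component
`pr₁ ∘ Φ̃ (e_n) = τ_n · (i T ⊗ ⋯ ⊗ T)`. -/
def Phi {n : ℕ} (ε : Fin n → ℝ) (i : Fin n) :
    Matrix (Fin (n / 2) → Fin 2) (Fin (n / 2) → Fin 2) ℂ :=
  tau ε i •
    if i.val < 2 * (n / 2) then
      tprod fun ν : Fin (n / 2) =>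
        if ν.val < i.val / 2 then matT
        else if ν.val = i.val / 2 then (if i.val % 2 = 0 then matG1 else matG2)
        else matE
    else Complex.I • tprod fun _ : Fin (n / 2) => matT

/-- The spinor module `Δ_{p,q} = ℂ^{2^{⌊n/2⌋}}`. -/
abbrev Spinor (n : ℕ) := (Fin (n / 2) → Fin 2) → ℂ

/-- Clifford multiplication by a real vector, as a matrix. -/
def cliffR {n : ℕ} (ε : Fin n → ℝ) (x : Fin n → ℝ) :
    Matrix (Fin (n / 2) → Fin 2) (Fin (n / 2) → Fin 2) ℂ :=
  ∑ i, (x i : ℂ) • Phi ε i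

/-- Clifford multiplication by a complex vector (complex-bilinear extension). -/
def cliffC {n : ℕ} (ε : Fin n → ℝ) (x : Fin n → ℂ) :
    Matrix (Fin (n / 2) → Fin 2) (Fin (n / 2) → Fin 2) ℂ :=
  ∑ i, x i • Phi ε i

/-- The scalar product `⟨x,y⟩_{p,q} = ∑ ε_i x_i y_i` on `ℝⁿ`. -/
def ipR {n : ℕ} (ε : Fin n → ℝ) (x y : Fin n → ℝ) : ℝ := ∑ i, ε i * x i * y i

/-- Its complex-bilinear extension to `ℂⁿ`. -/
def ipC {n : ℕ} (ε : Fin n → ℝ) (x y : Fin n → ℂ) : ℂ := ∑ i, (ε i : ℂ) * x i * y i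

/-- The standard Hermitian scalar product on the spinor module. -/
def stdInner {n : ℕ} (u v : Spinor n) : ℂ := ∑ b, (starRingEnd ℂ) (u b) * v b

/-- Clifford multiplication by the product `e_{i₁} ⋯ e_{i_k}` over a set of indices
`s = {i₁ < … < i_k}`, taken in increasing order. -/
def cliffSet {n : ℕ} (ε : Fin n → ℝ) (s : Finset (Fin n)) :
    Matrix (Fin (n / 2) → Fin 2) (Fin (n / 2) → Fin 2) ℂ :=
  ((s.sort (· ≤ ·)).map (Phi ε)).prod

/-- The set of indices with `ε_i = -1`. -/
def negSet {n : ℕ} (ε : Fin n → ℝ) : Finset (Fin n) := Finset.univ.filter fun i => ε i = -1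

/-- The indefinite spinor inner product `⟨u,v⟩_Δ = d · (e_{i₁} ⋯ e_{i_p} · u, v)`,
where `i₁ < … < i_p` are the indices with `ε = -1`. -/
def sform {n : ℕ} (ε : Fin n → ℝ) (d : ℂ) (u v : Spinor n) : ℂ :=
  d * stdInner ((cliffSet ε (negSet ε)).mulVec u) v

/-- The coefficient `d_{k,p} · ε_{i₁} ⋯ ε_{i_k} · ⟨e_{i₁} ⋯ e_{i_k} · χ, χ⟩_Δ` of the
algebraic Dirac form (`dD` is the constant of the spinor inner product, `dk` is `d_{k,p}`). -/
def dCoeff {n : ℕ} (ε : Fin n → ℝ) (dD dk : ℂ) (s : Finset (Fin n)) (χ : Spinor n) : ℂ :=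
  dk * (∏ i ∈ s, (ε i : ℂ)) * sform ε dD ((cliffSet ε s).mulVec χ) χ

/-- The covector `X^♭ = ⟨X,·⟩_{p,q}`. -/
def flat {n : ℕ} (ε : Fin n → ℝ) (X : Fin n → ℝ) : (Fin n → ℝ) →ₗ[ℝ] ℝ :=
  ∑ i, (ε i * X i) • LinearMap.proj i

/-- The wedge product of `k` one-forms, as an alternating `k`-form. -/
def wedge1 {n k : ℕ} (f : Fin k → ((Fin n → ℝ) →ₗ[ℝ] ℝ)) :
    AlternatingMap ℝ (Fin n → ℝ) ℝ (Fin k) :=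
  (Matrix.detRowAlternating : AlternatingMap ℝ (Fin k → ℝ) ℝ (Fin k)).compLinearMap
    (LinearMap.pi f)

/-- The algebraic Dirac `k`-form
`α^k_χ = d_{k,p} ∑_{i₁<⋯<i_k} ε_{i₁}⋯ε_{i_k} ⟨e_{i₁}⋯e_{i_k}·χ, χ⟩_Δ e^♭_{i₁} ∧ ⋯ ∧ e^♭_{i_k}`
(a real form; the coefficients are real by the choice of the constant `dk = d_{k,p}`). -/
def diracForm {n : ℕ} (ε : Fin n → ℝ) (dD dk : ℂ) (k : ℕ) (χ : Spinor n) :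
    AlternatingMap ℝ (Fin n → ℝ) ℝ (Fin k) :=
  ∑ s : Finset (Fin n),
    if h : s.card = k then
      (dCoeff ε dD dk s χ).re •
        wedge1 fun j => flat ε (Pi.single (s.orderEmbOfFin h j) 1)
    else 0

/-- The wedge product of `j` one-forms with a `(p-j)`-form, as an alternating `p`-form. -/
def wedgeMix {n p j : ℕ} (h : j ≤ p) (f : Fin j → ((Fin n → ℝ) →ₗ[ℝ] ℝ))
    (β : AlternatingMap ℝ (Fin n → ℝ) ℝ (Fin (p - j))) :
    AlternatingMap ℝ (Fin n → ℝ) ℝ (Fin p) :=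
  AlternatingMap.domDomCongr (finSumFinEquiv.trans (finCongr (by omega)))
    ((TensorProduct.lid ℝ ℝ).toLinearMap.compAlternatingMap ((wedge1 f).domCoprod β))

/-- The basis spinor `u(ε₁,…,ε_m)` (encoded by `a : Fin m → Fin 2`, where `a ν = 0`
corresponds to the label `ε_{ν+1} = 1` and `a ν = 1` to `ε_{ν+1} = -1`). -/
def uB (n : ℕ) (a : Fin (n / 2) → Fin 2) : Spinor n := fun b => if b = a then 1 else 0

end

end Paper

theorem List.prod_mul_eq_neg_one_pow_mul {R : Type*} [Ring R] {a : R} {l : List R}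
    (h : ∀ b ∈ l, a * b = -(b * a)) : l.prod * a = (-1) ^ l.length * (a * l.prod) := by
  induction l with
  | nil => simp
  | cons b t ih =>
    rw [List.forall_mem_cons] at h
    have hb : b * a = -(a * b) := by rw [h.1, neg_neg]
    have hcomm : Commute ((-1 : R) ^ t.length) b := (Commute.neg_one_left b).pow_left _
    rw [List.prod_cons, List.length_cons, mul_assoc, ih h.2, ← mul_assoc, ← hcomm.eq,
      mul_assoc, ← mul_assoc b, hb, pow_succ]
    simp only [neg_mul, mul_neg, mul_one, mul_assoc]

theorem List.prod_mul_self_eq_neg_one_pow {R : Type*} [Ring R] {l : List R}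
    (hl : l.Pairwise fun x y => x * y = -(y * x)) (hsq : ∀ b ∈ l, b * b = 1) :
    l.prod * l.prod = (-1) ^ l.length.choose 2 := by
  induction l with
  | nil => simp
  | cons a t ih =>
    rw [List.pairwise_cons] at hl
    rw [List.forall_mem_cons] at hsq
    have hcomm : Commute ((-1 : R) ^ t.length) a := (Commute.neg_one_left a).pow_left _
    rw [List.prod_cons, List.length_cons, Nat.choose_succ_succ, Nat.choose_one_right, pow_add,
      mul_assoc, ← mul_assoc t.prod, List.prod_mul_eq_neg_one_pow_mul hl.1]
    calc a * ((-1) ^ t.length * (a * t.prod) * t.prod)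
        = (-1) ^ t.length * (a * a) * (t.prod * t.prod) := by
          simp only [← mul_assoc]; rw [← hcomm.eq]
      _ = _ := by rw [hsq.1, mul_one, ih hl.2 hsq.2]

theorem AlternatingMap.sum_apply {R M N ι α : Type*} [Semiring R] [AddCommMonoid M]
    [AddCommMonoid N] [Module R M] [Module R N] (s : Finset α) (F : α → M [⋀^ι]→ₗ[R] N)
    (v : ι → M) : (∑ a ∈ s, F a) v = ∑ a ∈ s, F a v := by
  induction s using Finset.cons_induction with
  | empty => rfl
  | cons a s ha ih => rw [Finset.sum_cons, Finset.sum_cons, AlternatingMap.add_apply, ih]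

theorem Matrix.neg_one_pow_eq_smul_one {ι R : Type*} [Fintype ι] [DecidableEq ι] [CommRing R]
    (m : ℕ) : (-1 : Matrix ι ι R) ^ m = ((-1 : R) ^ m) • (1 : Matrix ι ι R) := by
  conv_lhs => rw [← map_one (algebraMap R (Matrix ι ι R)), ← map_neg, ← map_pow]
  rw [Algebra.algebraMap_eq_smul_one]

namespace Paper

lemma matT_mul_self : matT * matT = 1 := by
  ext i j; fin_cases i <;> fin_cases j <;> simp [matT]

lemma matG1_mul_self : matG1 * matG1 = -1 := by
  ext i j; fin_cases i <;> fin_cases j <;> simp [matG1]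

lemma matG2_mul_self : matG2 * matG2 = -1 := by
  ext i j; fin_cases i <;> fin_cases j <;> simp [matG2]

lemma matG1_mul_matG2 : matG1 * matG2 = -(matG2 * matG1) := by
  ext i j; fin_cases i <;> fin_cases j <;> simp [matG1, matG2]

lemma matG1_mul_matT : matG1 * matT = -(matT * matG1) := by
  ext i j; fin_cases i <;> fin_cases j <;> simp [matG1, matT]

lemma matG2_mul_matT : matG2 * matT = -(matT * matG2) := by
  ext i j; fin_cases i <;> fin_cases j <;> simp [matG2, matT]

lemma tprod_mul {m : ℕ} (M N : Fin m → Matrix (Fin 2) (Fin 2) ℂ) :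
    tprod M * tprod N = tprod fun ν => M ν * N ν := by
  ext a b
  simp only [tprod, Matrix.mul_apply, Matrix.of_apply, Fintype.prod_sum, Finset.prod_mul_distrib]

lemma tprod_one {m : ℕ} : tprod (fun _ : Fin m => (1 : Matrix (Fin 2) (Fin 2) ℂ)) = 1 := by
  ext a b
  simp [tprod, Matrix.one_apply, Finset.prod_boole, funext_iff]

lemma tprod_eq_neg_of_eq_neg_at {m : ℕ} {M N : Fin m → Matrix (Fin 2) (Fin 2) ℂ} (ν₀ : Fin m)
    (h₀ : M ν₀ = -N ν₀) (h : ∀ ν ≠ ν₀, M ν = N ν) : tprod M = -tprod N := by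
  ext a b
  simp only [tprod, Matrix.of_apply, Matrix.neg_apply,
    ← Finset.mul_prod_erase _ _ (Finset.mem_univ ν₀), h₀, Matrix.neg_apply, neg_mul]
  congr 2
  exact Finset.prod_congr rfl fun ν hν => by rw [h ν (Finset.ne_of_mem_erase hν)]

/-- The Kronecker factors of `Phi ε i`; the extra factor `i` of the last matrix for odd `n` is
moved into `phiScalar`. -/
def phiSlot (n i : ℕ) (ν : Fin (n / 2)) : Matrix (Fin 2) (Fin 2) ℂ :=
  if i < 2 * (n / 2) then
    if ν.val < i / 2 then matT
    else if ν.val = i / 2 then (if i % 2 = 0 then matG1 else matG2)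
    else matE
  else matT

noncomputable def phiScalar {n : ℕ} (ε : Fin n → ℝ) (i : Fin n) : ℂ :=
  tau ε i * if i.val < 2 * (n / 2) then 1 else Complex.I

lemma Phi_eq_smul_tprod {n : ℕ} (ε : Fin n → ℝ) (i : Fin n) :
    Phi ε i = phiScalar ε i • tprod (phiSlot n i) := by
  unfold Phi phiScalar phiSlot
  by_cases h : i.val < 2 * (n / 2) <;> simp [h, smul_smul, mul_comm]

lemma phiSlot_commute {n i j : ℕ} (hij : i < j) (hj : j < n) {ν : Fin (n / 2)}
    (hν : ν.val ≠ i / 2) : Commute (phiSlot n i ν) (phiSlot n j ν) := by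
  unfold phiSlot
  split_ifs <;> first | omega | exact Commute.refl _ | exact Commute.one_left _

lemma phiSlot_anticomm {n i j : ℕ} (hij : i < j) (hj : j < n) {ν : Fin (n / 2)}
    (hν : ν.val = i / 2) : phiSlot n i ν * phiSlot n j ν = -(phiSlot n j ν * phiSlot n i ν) := by
  unfold phiSlot
  split_ifs <;>
    first | omega | exact matG1_mul_matG2 | exact matG1_mul_matT | exact matG2_mul_matT

lemma phiSlot_mul_self {n i : ℕ} (hi : i < 2 * (n / 2)) (ν : Fin (n / 2)) :
    phiSlot n i ν * phiSlot n i ν = if ν.val = i / 2 then -1 else 1 := by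
  unfold phiSlot
  split_ifs <;> first
    | omega | exact matT_mul_self | exact matG1_mul_self | exact matG2_mul_self | exact mul_one 1

lemma Phi_anticomm_of_lt {n : ℕ} (ε : Fin n → ℝ) {i j : Fin n} (hij : i < j) :
    Phi ε i * Phi ε j = -(Phi ε j * Phi ε i) := by
  have hν₀ : i.val / 2 < n / 2 := by omega
  rw [Phi_eq_smul_tprod, Phi_eq_smul_tprod, smul_mul_smul_comm, smul_mul_smul_comm, tprod_mul,
    tprod_mul, tprod_eq_neg_of_eq_neg_at ⟨i.val / 2, hν₀⟩ (phiSlot_anticomm hij j.isLt rfl)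
      fun ν hν => (phiSlot_commute hij j.isLt (by simpa [Fin.ext_iff] using hν)).eq,
    smul_neg, mul_comm]

lemma Phi_anticomm {n : ℕ} (ε : Fin n → ℝ) {i j : Fin n} (hij : i ≠ j) :
    Phi ε i * Phi ε j = -(Phi ε j * Phi ε i) := by
  rcases hij.lt_or_gt with h | h
  · exact Phi_anticomm_of_lt ε h
  · rw [Phi_anticomm_of_lt ε h, neg_neg]

lemma Phi_mul_self_of_eq_neg_one {n : ℕ} (ε : Fin n → ℝ) {i : Fin n} (h : ε i = -1) :
    Phi ε i * Phi ε i = 1 := by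
  have htau : tau ε i = Complex.I := by norm_num [tau, h]
  rw [Phi_eq_smul_tprod, smul_mul_smul_comm, tprod_mul]
  by_cases hi : i.val < 2 * (n / 2)
  · have hν₀ : i.val / 2 < n / 2 := by omega
    rw [tprod_eq_neg_of_eq_neg_at (N := fun _ => 1) ⟨i.val / 2, hν₀⟩
        (by simp [phiSlot_mul_self hi]) fun ν hν => by
          simp [phiSlot_mul_self hi, Fin.ext_iff.not.mp hν],
      tprod_one]
    simp [phiScalar, hi, htau]
  · simp only [phiSlot, hi, if_false, matT_mul_self, tprod_one]
    simp [phiScalar, hi, htau]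

lemma eq_neg_one_of_mem_negSet {n : ℕ} {ε : Fin n → ℝ} {i : Fin n} (hi : i ∈ negSet ε) :
    ε i = -1 :=
  (Finset.mem_filter.1 hi).2

lemma cliffSet_negSet_mul_self {n : ℕ} (ε : Fin n → ℝ) :
    cliffSet ε (negSet ε) * cliffSet ε (negSet ε) = (-1) ^ (negSet ε).card.choose 2 := by
  unfold cliffSet
  rw [List.prod_mul_self_eq_neg_one_pow, List.length_map, Finset.length_sort]
  · exact ((negSet ε).sortedLT_sort.pairwise.imp ne_of_lt).map _ fun _ _ => Phi_anticomm ε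
  · simp only [List.mem_map, Finset.mem_sort, forall_exists_index, and_imp]
    rintro _ i hi rfl
    exact Phi_mul_self_of_eq_neg_one ε (eq_neg_one_of_mem_negSet hi)

lemma stdInner_eq_star_dotProduct {n : ℕ} (u v : Spinor n) : stdInner u v = star u ⬝ᵥ v :=
  rfl

lemma dCoeff_negSet {n : ℕ} (ε : Fin n → ℝ) (dD dk : ℂ) (χ : Spinor n) :
    dCoeff ε dD dk (negSet ε) χ =
      dk * (-1) ^ (negSet ε).card * dD * (-1) ^ (negSet ε).card.choose 2 * (star χ ⬝ᵥ χ) := by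
  have hprod : ∏ i ∈ negSet ε, (ε i : ℂ) = (-1) ^ (negSet ε).card :=
    Finset.prod_eq_pow_card fun i hi => by simp [eq_neg_one_of_mem_negSet hi]
  rw [dCoeff, sform, hprod, Matrix.mulVec_mulVec, cliffSet_negSet_mul_self,
    stdInner_eq_star_dotProduct, Matrix.neg_one_pow_eq_smul_one, smul_mulVec, one_mulVec,
    star_smul, smul_dotProduct]
  simp [mul_assoc]

open scoped ComplexOrder in
lemma dCoeff_negSet_eq_zero_iff {n : ℕ} (ε : Fin n → ℝ) {dD dk : ℂ} (hdD : dD ≠ 0)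
    (hdk : dk ≠ 0) (χ : Spinor n) : dCoeff ε dD dk (negSet ε) χ = 0 ↔ χ = 0 := by
  simp [dCoeff_negSet, hdD, hdk]

lemma dCoeff_zero {n : ℕ} (ε : Fin n → ℝ) (dD dk : ℂ) (s : Finset (Fin n)) :
    dCoeff ε dD dk s 0 = 0 := by
  simp [dCoeff, sform, stdInner]

lemma flat_single_apply_single {n : ℕ} (ε : Fin n → ℝ) (a b : Fin n) :
    flat ε (Pi.single a 1) (Pi.single b 1) = if a = b then ε a else 0 := by
  simp [flat, Pi.single_apply, eq_comm]

lemma wedge1_flat_single_apply_single {n k : ℕ} (ε : Fin n → ℝ) {s t : Finset (Fin n)}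
    (hs : s.card = k) (ht : t.card = k) :
    wedge1 (fun j => flat ε (Pi.single (s.orderEmbOfFin hs j) 1))
        (fun i => Pi.single (t.orderEmbOfFin ht i) 1) = if s = t then ∏ i ∈ t, ε i else 0 := by
  change Matrix.det (Matrix.of fun i j =>
    flat ε (Pi.single (s.orderEmbOfFin hs j) 1) (Pi.single (t.orderEmbOfFin ht i) 1)) = _
  simp only [flat_single_apply_single]
  split_ifs with hst
  · subst hst
    have hdiag : (Matrix.of fun i j => if s.orderEmbOfFin hs j = s.orderEmbOfFin ht i
        then ε (s.orderEmbOfFin hs j) else 0) =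
        Matrix.diagonal fun i => ε (s.orderEmbOfFin hs i) := by
      ext i j
      by_cases h : i = j
      · simp [h]
      · simp [h, Ne.symm h]
    rw [hdiag, Matrix.det_diagonal]
    conv_rhs => rw [← Finset.map_orderEmbOfFin_univ s hs, Finset.prod_map]
    rfl
  · obtain ⟨a, has, hat⟩ := Finset.not_subset.1 fun hsub =>
      hst (Finset.eq_of_subset_of_card_le hsub (by omega))
    obtain ⟨j₀, rfl⟩ : a ∈ Set.range (s.orderEmbOfFin hs) := by
      rwa [Finset.range_orderEmbOfFin]
    refine Matrix.det_eq_zero_of_column_eq_zero j₀ fun i => ?_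
    rw [Matrix.of_apply, if_neg fun h => hat (by rw [h]; exact t.orderEmbOfFin_mem ht i)]

lemma diracForm_apply_single {n k : ℕ} (ε : Fin n → ℝ) (dD dk : ℂ) (χ : Spinor n)
    {t : Finset (Fin n)} (ht : t.card = k) :
    diracForm ε dD dk k χ (fun i => Pi.single (t.orderEmbOfFin ht i) 1) =
      (dCoeff ε dD dk t χ).re * ∏ i ∈ t, ε i := by
  rw [diracForm, AlternatingMap.sum_apply, Finset.sum_eq_single_of_mem t (Finset.mem_univ t),
    dif_pos ht, AlternatingMap.smul_apply, wedge1_flat_single_apply_single, if_pos rfl,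
    smul_eq_mul]
  intro s _ hst
  split_ifs with hs
  · rw [AlternatingMap.smul_apply, wedge1_flat_single_apply_single, if_neg hst, smul_zero]
  · rfl

theorem dirac_p_form_vanishes_iff_zero_general
    (n p : ℕ) (ε : Fin n → ℝ)
    (hp : (negSet ε).card = p)
    -- `dD` is a fixed power of `i` making the spinor inner product Hermitian
    (dD : ℂ) (hdD : ∃ k : ℕ, dD = Complex.I ^ k)
    -- `dk = d_{p,p}` is a fixed (nonzero) power of `i` making the Dirac `p`-forms real
    (dk : ℂ) (hdk : ∃ k : ℕ, dk = Complex.I ^ k)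
    (hreal : ∀ (χ : Spinor n) (s : Finset (Fin n)), s.card = p →
      (dCoeff ε dD dk s χ).im = 0) :
    ∀ χ : Spinor n, diracForm ε dD dk p χ = 0 ↔ χ = 0 := by
  have hdD₀ : dD ≠ 0 := by obtain ⟨_, rfl⟩ := hdD; exact pow_ne_zero _ I_ne_zero
  have hdk₀ : dk ≠ 0 := by obtain ⟨_, rfl⟩ := hdk; exact pow_ne_zero _ I_ne_zero
  intro χ
  constructor
  · intro hχ
    have hre : (dCoeff ε dD dk (negSet ε) χ).re * ∏ i ∈ negSet ε, ε i = 0 := by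
      rw [← diracForm_apply_single ε dD dk χ hp, hχ, AlternatingMap.zero_apply]
    have hprod : ∏ i ∈ negSet ε, ε i ≠ 0 :=
      Finset.prod_ne_zero_iff.2 fun i hi => by simp [eq_neg_one_of_mem_negSet hi]
    rw [← dCoeff_negSet_eq_zero_iff ε hdD₀ hdk₀]
    exact Complex.ext (by simpa [hprod] using hre) (hreal χ _ hp)
  · rintro rfl
    simp [diracForm, dCoeff_zero]

theorem dirac_p_form_vanishes_iff_zero
    (n p : ℕ) (ε : Fin n → ℝ) (hε : ∀ i, ε i = 1 ∨ ε i = -1)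
    (hp : (negSet ε).card = p)
    -- `dD` is a fixed power of `i` making the spinor inner product Hermitian
    (dD : ℂ) (hdD : ∃ k : ℕ, dD = Complex.I ^ k)
    (hherm : ∀ u v : Spinor n, sform ε dD v u = (starRingEnd ℂ) (sform ε dD u v))
    -- `dk = d_{p,p}` is a fixed (nonzero) power of `i` making the Dirac `p`-forms real
    (dk : ℂ) (hdk : ∃ k : ℕ, dk = Complex.I ^ k)
    (hreal : ∀ (χ : Spinor n) (s : Finset (Fin n)), s.card = p →
      (dCoeff ε dD dk s χ).im = 0) :
    ∀ χ : Spinor n, diracForm ε dD dk p χ = 0 ↔ χ = 0 :=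
  dirac_p_form_vanishes_iff_zero_general n p ε hp dD hdD dk hdk hreal

end Paper
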